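/- arXiv:2001.00751 — 2 statements merged into one kernel-verified Lean document; each statement's English description precedes it below -/
import Mathlib

section
/- Let k, ℓ ∈ ℕ with k ≤ ℓ and let E be an ℓ × k integer matrix such that the map h : ℤ^k → ℤ^ℓ, h(X) = E·X, is injective and the quotient group ℤ^ℓ/range(h) is torsion free. Let d be the greatest common divisor of the determinants of all full square submatrices of E. Then for every r with 1 ≤ r ≤ k and every r × r submatrix F of E (obtained by choosing r rows via an injection {1,…,r} → {1,…,ℓ} and r columns via an injection {1,…,r} → {1,…,k}), d divides det(F). -/
/-!
Torsion-freeness of `ℤ^ℓ / range E` means that `E` stays injective after reduction modulo any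
prime `p`. Over the field `ZMod p` some `k` rows of `E` are then linearly independent, so the
corresponding full minor is not divisible by `p`. Hence `d` has no prime factor, i.e. `d = ±1`,
and it divides every minor.
-/

open Matrix Module Submodule

namespace Matrix

theorem rank_eq_card_of_injective_mulVec {K m n : Type*} [Field K] [Fintype n]
    {M : Matrix m n K} (hM : Function.Injective M.mulVec) : M.rank = Fintype.card n := by
  rw [Matrix.rank, LinearMap.finrank_range_of_inj (f := M.mulVecLin) hM,
    finrank_fintype_fun_eq_card]

theorem exists_linearIndepOn_row_card_eq {K m n : Type*} [Field K] [Fintype m] [Fintype n]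
    {M : Matrix m n K} (hM : Function.Injective M.mulVec) :
    ∃ s : Finset m, LinearIndepOn K M.row s ∧ s.card = Fintype.card n := by
  classical
  obtain ⟨b, -, -, hspan, hli⟩ := exists_linearIndepOn_extension (K := K) (v := M.row)
    (linearIndepOn_empty K M.row) (Set.subset_univ ∅)
  have hspan_eq : span K (M.row '' b) = span K (Set.range M.row) :=
    le_antisymm (span_mono (Set.image_subset_range _ _)) (span_le.2 (by simpa using hspan))
  refine ⟨b.toFinset, by simpa using hli, ?_⟩
  calc b.toFinset.card = finrank K (span K (Set.range fun i : b => M.row i)) := by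
        rw [finrank_span_eq_card hli, Set.toFinset_card]
    _ = M.rank := by rw [← Set.image_eq_range, hspan_eq, rank_eq_finrank_span_row]
    _ = Fintype.card n := rank_eq_card_of_injective_mulVec hM

theorem det_submatrix_orderEmbOfFin_ne_zero {K m : Type*} [Field K] [LinearOrder m] {k : ℕ}
    {M : Matrix m (Fin k) K} {s : Finset m} (hli : LinearIndepOn K M.row s) (hs : s.card = k) :
    (M.submatrix (s.orderEmbOfFin hs) id).det ≠ 0 := by
  have hrows : LinearIndependent K (M.submatrix (s.orderEmbOfFin hs) id).row :=
    hli.comp (fun j => ⟨s.orderEmbOfFin hs j, s.orderEmbOfFin_mem hs j⟩)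
      fun i j hij => (s.orderEmbOfFin hs).injective (congrArg Subtype.val hij)
  exact ((isUnit_iff_isUnit_det _).mp (linearIndependent_rows_iff_isUnit.mp hrows)).ne_zero

theorem exists_strictMono_det_submatrix_ne_zero {K m : Type*} [Field K] [Fintype m]
    [LinearOrder m] {k : ℕ} {M : Matrix m (Fin k) K} (hM : Function.Injective M.mulVec) :
    ∃ ρ : Fin k ↪ m, StrictMono ρ ∧ (M.submatrix ρ id).det ≠ 0 := by
  obtain ⟨s, hli, hs⟩ := exists_linearIndepOn_row_card_eq hM
  rw [Fintype.card_fin] at hs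
  exact ⟨(s.orderEmbOfFin hs).toEmbedding, (s.orderEmbOfFin hs).strictMono,
    det_submatrix_orderEmbOfFin_ne_zero hli hs⟩

theorem mulVec_map_intCast_injective {m n : Type*} [Fintype n] {p : ℕ} {E : Matrix m n ℤ}
    (hinj : Function.Injective E.mulVec)
    (hsat : ∀ Y : m → ℤ, (p : ℤ) • Y ∈ Set.range E.mulVec → Y ∈ Set.range E.mulVec) :
    Function.Injective (E.map (Int.cast : ℤ → ZMod p)).mulVec := by
  refine (injective_iff_map_eq_zero (E.map (Int.cast : ℤ → ZMod p)).mulVecLin).2 fun z hz => ?_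
  set X : n → ℤ := fun j => (z j).cast
  have hX : (Int.cast ∘ X : n → ZMod p) = z := funext fun j => ZMod.intCast_zmod_cast (z j)
  have hdvd (i : m) : (p : ℤ) ∣ E.mulVec X i := by
    have hcast := RingHom.map_mulVec (Int.castRingHom (ZMod p)) E X i
    simp only [Int.coe_castRingHom, hX] at hcast
    rw [← ZMod.intCast_zmod_eq_zero_iff_dvd, hcast]
    exact congrFun hz i
  choose Y hY using hdvd
  obtain ⟨Z, hZ⟩ := hsat Y ⟨X, funext hY⟩
  have hXZ : X = (p : ℤ) • Z := hinj (by rw [mulVec_smul, hZ]; exact funext hY)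
  rw [← hX, hXZ]
  funext j
  simp

end Matrix

theorem stmt6_general {k ℓ : ℕ} (E : Matrix (Fin ℓ) (Fin k) ℤ)
    (hinj : Function.Injective (E.mulVec : (Fin k → ℤ) → (Fin ℓ → ℤ)))
    (htf : ∀ (Y : Fin ℓ → ℤ) (n : ℕ), 0 < n →
        (n : ℤ) • Y ∈ Set.range E.mulVec → Y ∈ Set.range E.mulVec)
    (d : ℤ)
    (hd : d = Finset.gcd
        (Finset.univ.filter (fun ρ : Fin k ↪ Fin ℓ => StrictMono ρ))
        (fun ρ => (E.submatrix ρ id).det)) :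
    ∀ (r : ℕ), 1 ≤ r → r ≤ k → ∀ (ρ : Fin r ↪ Fin ℓ) (σ : Fin r ↪ Fin k),
      d ∣ (E.submatrix ρ σ).det := by
  have hunit : IsUnit d := by
    rw [Int.isUnit_iff_natAbs_eq, Nat.eq_one_iff_not_exists_prime_dvd]
    intro p hp hpd
    have : Fact p.Prime := ⟨hp⟩
    have hinj_p := mulVec_map_intCast_injective (p := p) hinj (htf · p hp.pos)
    obtain ⟨ρ, hρ, hdet⟩ := exists_strictMono_det_submatrix_ne_zero hinj_p
    have hdvd : (p : ℤ) ∣ (E.submatrix ρ id).det := by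
      refine (Int.natCast_dvd.2 hpd).trans ?_
      rw [hd]
      exact Finset.gcd_dvd (by simpa using hρ)
    rw [submatrix_map, ← Int.cast_det] at hdet
    exact hdet ((ZMod.intCast_zmod_eq_zero_iff_dvd _ p).2 hdvd)
  exact fun _ _ _ _ _ => hunit.dvd

/-- Let `E` be an `ℓ × k` integer matrix (`k ≤ ℓ`) such that
`X ↦ E.mulVec X` is injective and `ℤ^ℓ / range(E.mulVec)` is torsion free.
If `d` is the gcd of the determinants of all full square submatrices of `E`, then
`d` divides the determinant of every `r × r` submatrix of `E` for `1 ≤ r ≤ k`. -/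
theorem stmt6 {k ℓ : ℕ} (hkl : k ≤ ℓ) (E : Matrix (Fin ℓ) (Fin k) ℤ)
    (hinj : Function.Injective (E.mulVec : (Fin k → ℤ) → (Fin ℓ → ℤ)))
    (htf : ∀ (Y : Fin ℓ → ℤ) (n : ℕ), 0 < n →
        (n : ℤ) • Y ∈ Set.range E.mulVec → Y ∈ Set.range E.mulVec)
    (d : ℤ)
    (hd : d = Finset.gcd
        (Finset.univ.filter (fun ρ : Fin k ↪ Fin ℓ => StrictMono ρ))
        (fun ρ => (E.submatrix ρ id).det)) :
    ∀ (r : ℕ), 1 ≤ r → r ≤ k → ∀ (ρ : Fin r ↪ Fin ℓ) (σ : Fin r ↪ Fin k),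
      d ∣ (E.submatrix ρ σ).det :=
  stmt6_general E hinj htf d hd
end

section
/- Let k, ℓ ∈ ℕ with ℓ ≤ k and let E be an ℓ × k integer matrix. Then there exists a k × ℓ integer matrix R with E·R = I_ℓ if and only if the greatest common divisor of the determinants of all full square submatrices of E equals 1. -/
/-!
Expanding `det (E * B)` multilinearly in the columns of `E * B` writes it as a combination of the
minors `det (E.submatrix id f)`, `f : Fin ℓ → Fin k`; each of these is `0` (repeated column) or
`±` a maximal minor, so the gcd of the maximal minors divides `det (E * B)`. Conversely, Bézout
gives `∑ c σ * det E_σ = 1`, and `∑ c σ • P_σ * adj E_σ` is a right inverse, where `P_σ` is the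
`k × ℓ` column-selection matrix, so that `E * P_σ = E_σ`.
-/

open Matrix Finset

lemma Function.Injective.exists_strictMono_comp_perm {α : Type*} [LinearOrder α] {ℓ : ℕ}
    {f : Fin ℓ → α} (hf : f.Injective) :
    ∃ σ : Fin ℓ ↪ α, StrictMono σ ∧ ∃ τ : Equiv.Perm (Fin ℓ), f = σ ∘ τ := by
  have hmono : StrictMono (f ∘ Tuple.sort f) :=
    (Tuple.monotone_sort f).strictMono_of_injective (hf.comp (Tuple.sort f).injective)
  refine ⟨⟨_, hmono.injective⟩, hmono, (Tuple.sort f)⁻¹, ?_⟩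
  ext i
  simp

namespace Matrix

variable {R : Type*} [CommRing R]

theorem det_mul_eq_sum_prod_mul_det_submatrix {m n : Type*} [Fintype m] [DecidableEq m]
    [Fintype n] (A : Matrix m n R) (B : Matrix n m R) :
    (A * B).det = ∑ f : m → n, (∏ i, B (f i) i) * (A.submatrix id f).det := by
  simp only [det_apply', mul_apply, prod_univ_sum, mul_sum, prod_mul_distrib, submatrix_apply, id]
  rw [sum_comm]
  refine sum_congr rfl fun f _ => sum_congr rfl fun π _ => ?_
  ring

theorem mul_sum_smul_submatrix_one_mul_adjugate {m n ι : Type*} [Fintype m] [DecidableEq m]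
    [Fintype n] [DecidableEq n] (A : Matrix m n R) (s : Finset ι) (σ : ι → m → n) (c : ι → R) :
    A * ∑ i ∈ s, c i • ((1 : Matrix n n R).submatrix id (σ i) * (A.submatrix id (σ i)).adjugate)
      = (∑ i ∈ s, c i * (A.submatrix id (σ i)).det) • 1 := by
  rw [Matrix.mul_sum, sum_smul]
  refine sum_congr rfl fun i _ => ?_
  rw [Matrix.mul_smul, ← Matrix.mul_assoc, ← Equiv.coe_refl, mul_submatrix_one, Equiv.refl_symm,
    Equiv.coe_refl, Function.id_comp, mul_adjugate, smul_smul]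

variable [NormalizedGCDMonoid R] {ℓ k : ℕ}

noncomputable def maxMinorsGcd (E : Matrix (Fin ℓ) (Fin k) R) : R :=
  (univ.filter fun σ : Fin ℓ ↪ Fin k => StrictMono σ).gcd fun σ => (E.submatrix id σ).det

theorem maxMinorsGcd_dvd_det_submatrix (E : Matrix (Fin ℓ) (Fin k) R) (f : Fin ℓ → Fin k) :
    E.maxMinorsGcd ∣ (E.submatrix id f).det := by
  by_cases hf : f.Injective
  · obtain ⟨σ, hσ, τ, rfl⟩ := hf.exists_strictMono_comp_perm
    rw [show E.submatrix id (σ ∘ τ) = (E.submatrix id σ).submatrix id τ from rfl, det_permute']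
    exact Dvd.dvd.mul_left (gcd_dvd (by simpa using hσ)) _
  · obtain ⟨i, j, hfij, hij⟩ := Function.not_injective_iff.mp hf
    rw [det_zero_of_column_eq hij (by simp [hfij])]
    exact dvd_zero _

theorem maxMinorsGcd_dvd_det_mul (E : Matrix (Fin ℓ) (Fin k) R) (B : Matrix (Fin k) (Fin ℓ) R) :
    E.maxMinorsGcd ∣ (E * B).det := by
  rw [det_mul_eq_sum_prod_mul_det_submatrix]
  exact dvd_sum fun f _ => (E.maxMinorsGcd_dvd_det_submatrix f).mul_left _

theorem maxMinorsGcd_eq_one_of_mul_eq_one {E : Matrix (Fin ℓ) (Fin k) R}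
    {B : Matrix (Fin k) (Fin ℓ) R} (h : E * B = 1) : E.maxMinorsGcd = 1 := by
  have hunit : IsUnit E.maxMinorsGcd :=
    isUnit_of_dvd_one (by simpa [h] using E.maxMinorsGcd_dvd_det_mul B)
  rw [← normalize_eq_one.mpr hunit, maxMinorsGcd, Finset.normalize_gcd]

theorem exists_mul_eq_one_of_maxMinorsGcd_eq_one [IsBezout R] {E : Matrix (Fin ℓ) (Fin k) R}
    (h : E.maxMinorsGcd = 1) : ∃ B : Matrix (Fin k) (Fin ℓ) R, E * B = 1 := by
  obtain ⟨c, hc⟩ := Finset.gcd_eq_sum_mul (univ.filter fun σ : Fin ℓ ↪ Fin k => StrictMono σ)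
    fun σ => (E.submatrix id σ).det
  rw [← maxMinorsGcd, h] at hc
  refine ⟨∑ σ ∈ univ.filter fun σ : Fin ℓ ↪ Fin k => StrictMono σ,
    c σ • ((1 : Matrix (Fin k) (Fin k) R).submatrix id σ * (E.submatrix id σ).adjugate), ?_⟩
  rw [mul_sum_smul_submatrix_one_mul_adjugate]
  simp_rw [mul_comm (c _), ← hc, one_smul]

end Matrix

theorem stmt8_general {k ℓ : ℕ} (E : Matrix (Fin ℓ) (Fin k) ℤ) :
    (∃ R : Matrix (Fin k) (Fin ℓ) ℤ, E * R = (1 : Matrix (Fin ℓ) (Fin ℓ) ℤ)) ↔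
      Finset.gcd (Finset.univ.filter (fun σ : Fin ℓ ↪ Fin k => StrictMono σ))
        (fun σ => (E.submatrix id σ).det) = 1 :=
  ⟨fun ⟨_, hR⟩ => maxMinorsGcd_eq_one_of_mul_eq_one hR, exists_mul_eq_one_of_maxMinorsGcd_eq_one⟩

/-- An `ℓ × k` integer matrix `E` with `ℓ ≤ k` has a right inverse integer
matrix (`E * R = I_ℓ`) iff the gcd of the determinants of all full square submatrices
of `E` (obtained by selecting `ℓ` of the `k` columns) equals `1`. -/
theorem stmt8 {k ℓ : ℕ} (hlk : ℓ ≤ k) (E : Matrix (Fin ℓ) (Fin k) ℤ) :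
    (∃ R : Matrix (Fin k) (Fin ℓ) ℤ, E * R = (1 : Matrix (Fin ℓ) (Fin ℓ) ℤ)) ↔
      Finset.gcd (Finset.univ.filter (fun σ : Fin ℓ ↪ Fin k => StrictMono σ))
        (fun σ => (E.submatrix id σ).det) = 1 :=
  stmt8_general E
end
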